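/- Every connected polyomino (finite edge-connected union of unit grid squares) of size at least 2 can be partitioned into elementary tiles of the following five shapes (up to rotation and reflection): the 2-domino (two cells in a row), the 3-domino (three cells in a row), the L-tromino, the T-tetromino, and the plus-pentomino. -/

import Mathlib

/-!
Layer a connected set by graph distance from a root `r`, and let `p` be the parent of a deepest
vertex. Then `p` together with all its deepest neighbours is a star, and removing it keeps the rest
connected, since every remaining vertex still reaches `r` through its parent. If only one vertex
is left over, it is the parent of `p` and joins the star. By induction, every connected set of at
least two vertices of any graph is partitioned into stars (a centre and a nonempty set of its
neighbours). In the grid such a star is a cell with one to four of its neighbours, and up to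
congruence these are exactly the five elementary shapes.
-/

/-- Two unit cells of the grid `ℤ × ℤ` are adjacent if they differ by 1 in
exactly one coordinate. -/
def AdjCell (p q : ℤ × ℤ) : Prop :=
  (p.1 - q.1) ^ 2 + (p.2 - q.2) ^ 2 = 1

/-- A (finite) set of cells is a connected polyomino if any two of its cells are
joined by a path of adjacent cells staying inside the set. -/
def ConnectedPoly (S : Finset (ℤ × ℤ)) : Prop :=
  ∀ p ∈ S, ∀ q ∈ S,
    Relation.ReflTransGen (fun a b => a ∈ S ∧ b ∈ S ∧ AdjCell a b) p q

/-- The eight symmetries of the square grid (rotations and reflections). -/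
def dihedralMaps : List ((ℤ × ℤ) → (ℤ × ℤ)) :=
  [ fun p => (p.1, p.2), fun p => (-p.2, p.1), fun p => (-p.1, -p.2),
    fun p => (p.2, -p.1), fun p => (p.2, p.1), fun p => (-p.1, p.2),
    fun p => (p.1, -p.2), fun p => (-p.2, -p.1) ]

/-- `T` is congruent to `S` under translations, rotations and reflections. -/
def PolyCongruent (S T : Finset (ℤ × ℤ)) : Prop :=
  ∃ f ∈ dihedralMaps, ∃ t : ℤ × ℤ, T = S.image fun p => t + f p

/-- The five elementary shapes: 2-domino, 3-domino, L-tromino, T-tetromino,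
plus-pentomino. -/
def elementaryShapes : List (Finset (ℤ × ℤ)) :=
  [ {(0, 0), (1, 0)},
    {(0, 0), (1, 0), (2, 0)},
    {(0, 0), (1, 0), (1, 1)},
    {(1, 0), (0, 1), (1, 1), (2, 1)},
    {(1, 0), (0, 1), (1, 1), (2, 1), (1, 2)} ]

open Finset

namespace SimpleGraph

variable {V : Type*} (G : SimpleGraph V)

-- The subgraph induced on `S`, kept on all of `V` (unlike `SimpleGraph.induce`, which lives on
-- the subtype) so that distances need no coercions.
def restrict (S : Finset V) : SimpleGraph V where
  Adj a b := a ∈ S ∧ b ∈ S ∧ G.Adj a b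
  symm := ⟨fun _ _ h => ⟨h.2.1, h.1, h.2.2.symm⟩⟩
  loopless := ⟨fun a h => G.loopless.irrefl a h.2.2⟩

def ConnectedOn (S : Finset V) : Prop :=
  ∀ p ∈ S, ∀ q ∈ S, (G.restrict S).Reachable p q

def IsStar [DecidableEq V] (P : Finset V) : Prop :=
  ∃ c L, L.Nonempty ∧ (∀ q ∈ L, G.Adj c q) ∧ P = insert c L

variable {G}

theorem Reachable.exists_adj_dist_succ {r q : V} (h : G.Reachable r q) (hq : q ≠ r) :
    ∃ m, G.Adj m q ∧ G.dist r m + 1 = G.dist r q := by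
  obtain ⟨w, hw⟩ := h.exists_walk_length_eq_dist
  cases hrev : w.reverse with
  | nil => exact absurd rfl hq
  | cons hadj w' =>
    rename_i m
    have hlen : w'.length + 1 = G.dist r q := by
      rw [← hw, ← w.length_reverse, hrev, Walk.length_cons]
    have hle : G.dist r q ≤ G.dist r m + 1 := by
      obtain ⟨w'', hw''⟩ := w'.reverse.reachable.exists_walk_length_eq_dist
      simpa [hw''] using dist_le (w''.concat hadj.symm)
    have hge : G.dist r m ≤ w'.length := w'.length_reverse ▸ dist_le w'.reverse
    exact ⟨m, hadj.symm, by omega⟩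

theorem connectedOn_of_exists_adj_lt {T : Finset V} {r : V} (hr : r ∈ T) (d : V → ℕ)
    (h : ∀ q ∈ T, q ≠ r → ∃ m ∈ T, G.Adj m q ∧ d m < d q) : G.ConnectedOn T := by
  have reach : ∀ n, ∀ q ∈ T, d q = n → (G.restrict T).Reachable r q := by
    intro n
    induction n using Nat.strong_induction_on with
    | _ n ih =>
      intro q hq hqn
      by_cases hqr : q = r
      · subst hqr; rfl
      obtain ⟨m, hm, hadj, hlt⟩ := h q hq hqr
      exact (ih (d m) (hqn ▸ hlt) m hm rfl).trans (Adj.reachable ⟨hm, hq, hadj⟩)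
  intro p hp q hq
  exact (reach _ p hp rfl).symm.trans (reach _ q hq rfl)

variable [DecidableEq V]

theorem connectedOn_sdiff_insert_deepest [DecidableRel G.Adj] {S : Finset V} {r p : V}
    {d : V → ℕ} (hr : r ∈ S) (hrp : d r < d p) (hdeep : ∀ q ∈ S, d q ≤ d p + 1)
    (parent : ∀ q ∈ S, q ≠ r → ∃ m ∈ S, G.Adj m q ∧ d m + 1 = d q) :
    G.ConnectedOn (S \ insert p {q ∈ S | G.Adj p q ∧ d q = d p + 1}) := by
  refine connectedOn_of_exists_adj_lt (r := r) ?_ d fun q hq hqr => ?_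
  · simp only [mem_sdiff, mem_insert, mem_filter, not_or, not_and]
    exact ⟨hr, by rintro rfl; omega, fun _ _ => by omega⟩
  simp only [mem_sdiff, mem_insert, mem_filter, not_or, not_and] at hq
  obtain ⟨m, hm, hadj, hdm⟩ := parent q hq.1 hqr
  refine ⟨m, ?_, hadj, by omega⟩
  simp only [mem_sdiff, mem_insert, mem_filter, not_or, not_and]
  refine ⟨hm, ?_, fun _ _ => ?_⟩
  · rintro rfl
    exact hq.2.2 hq.1 hadj (by have := hdeep q hq.1; omega)
  · have := hdeep q hq.1
    omega

theorem isStar_of_forall_adj {S : Finset V} {c : V} (hc : c ∈ S) (hcard : 2 ≤ #S)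
    (hadj : ∀ q ∈ S, q ≠ c → G.Adj c q) : G.IsStar S := by
  refine ⟨c, S.erase c, ?_, fun q hq => hadj q (mem_of_mem_erase hq) (ne_of_mem_erase hq),
    (insert_erase hc).symm⟩
  rw [← card_pos, card_erase_of_mem hc]
  omega

theorem exists_isStar_connectedOn_sdiff {S : Finset V} (hS : G.ConnectedOn S) (hcard : 2 ≤ #S) :
    ∃ P ⊆ S, G.IsStar P ∧ (P = S ∨ 2 ≤ #(S \ P) ∧ G.ConnectedOn (S \ P)) := by
  classical
  obtain ⟨r, hr⟩ : S.Nonempty := card_pos.mp (by omega)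
  set d := (G.restrict S).dist r
  have root : ∀ q ∈ S, d q = 0 ↔ q = r := fun q hq =>
    (hS r hr q hq).dist_eq_zero_iff.trans eq_comm
  have parent : ∀ q ∈ S, q ≠ r → ∃ m ∈ S, G.Adj m q ∧ d m + 1 = d q := fun q hq hqr =>
    let ⟨m, hadj, hm⟩ := (hS r hr q hq).exists_adj_dist_succ hqr
    ⟨m, hadj.1, hadj.2.2, hm⟩
  obtain ⟨u, hu, hmax⟩ := exists_max_image S d ⟨r, hr⟩
  by_cases hshallow : d u ≤ 1
  · refine ⟨S, subset_rfl, isStar_of_forall_adj hr hcard fun q hq hqr => ?_, Or.inl rfl⟩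
    obtain ⟨m, hm, hadj, hdm⟩ := parent q hq hqr
    have := hmax q hq
    exact (root m hm).mp (by omega) ▸ hadj
  have hur : u ≠ r := fun h => hshallow (by rw [(root u hu).mpr h]; omega)
  obtain ⟨p, hp, hpu, hdp⟩ := parent u hu hur
  have hpr : p ≠ r := fun h => hshallow (by rw [← hdp, (root p hp).mpr h])
  obtain ⟨g, hg, hgp, hdg⟩ := parent p hp hpr
  set C := {q ∈ S | G.Adj p q ∧ d q = d p + 1}
  have hconn := connectedOn_sdiff_insert_deepest (G := G) hr
    (by rw [(root r hr).mpr rfl]; omega) (fun q hq => hdp ▸ hmax q hq) parent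
  by_cases hbig : 2 ≤ #(S \ insert p C)
  · refine ⟨insert p C, insert_subset hp (filter_subset _ _), ?_, Or.inr ⟨hbig, hconn⟩⟩
    exact ⟨p, C, ⟨u, mem_filter.mpr ⟨hu, hpu, hdp.symm⟩⟩, fun q hq => (mem_filter.mp hq).2.1, rfl⟩
  -- Only the parent `g` of `p` is left over; it joins the star around `p`.
  have hgP : g ∈ S \ insert p C := by
    simp only [C, mem_sdiff, mem_insert, mem_filter, not_or, not_and]
    exact ⟨hg, by rintro rfl; omega, fun _ _ => by omega⟩
  refine ⟨S, subset_rfl, isStar_of_forall_adj hp hcard fun q hq hqp => ?_, Or.inl rfl⟩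
  by_cases hqC : q ∈ C
  · exact (mem_filter.mp hqC).2.1
  have hqP : q ∈ S \ insert p C := mem_sdiff.mpr ⟨hq, by simp [hqp, hqC]⟩
  rw [card_le_one.mp (by omega) q hqP g hgP]
  exact hgp.symm

theorem IsStar.nonempty {P : Finset V} (h : G.IsStar P) : P.Nonempty :=
  let ⟨c, _, _, _, hP⟩ := h
  hP ▸ insert_nonempty c _

theorem exists_isStar_partition {S : Finset V} (hS : G.ConnectedOn S) (hcard : 2 ≤ #S) :
    ∃ Part : Finset (Finset V), (Part : Set (Finset V)).PairwiseDisjoint id ∧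
      Part.sup id = S ∧ ∀ t ∈ Part, G.IsStar t := by
  induction S using Finset.strongInduction with
  | H S ih =>
  obtain ⟨P, hPS, hP, rfl | ⟨hcard', hconn'⟩⟩ := exists_isStar_connectedOn_sdiff hS hcard
  · exact ⟨{P}, by simp, by simp, by simpa using hP⟩
  obtain ⟨Part, hdisj, hsup, hstars⟩ := ih _ (sdiff_ssubset hPS hP.nonempty) hconn' hcard'
  refine ⟨insert P Part, ?_, ?_, ?_⟩
  · rw [coe_insert]
    exact hdisj.insert fun t ht _ =>
      disjoint_sdiff.mono_right (show t ≤ S \ P from hsup ▸ le_sup (f := id) ht)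
  · rw [sup_insert, hsup]
    exact union_sdiff_of_subset hPS
  · exact forall_mem_insert _ _ _ |>.mpr ⟨hP, hstars⟩

end SimpleGraph

def gridUnits : Finset (ℤ × ℤ) := {(1, 0), (-1, 0), (0, 1), (0, -1)}

theorem sq_add_sq_eq_one_iff_mem_gridUnits {v : ℤ × ℤ} :
    v.1 ^ 2 + v.2 ^ 2 = 1 ↔ v ∈ gridUnits := by
  obtain ⟨x, y⟩ := v
  constructor
  · intro h
    have hx : -1 ≤ x ∧ x ≤ 1 := ⟨by nlinarith [sq_nonneg y], by nlinarith [sq_nonneg y]⟩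
    have hy : -1 ≤ y ∧ y ≤ 1 := ⟨by nlinarith [sq_nonneg x], by nlinarith [sq_nonneg x]⟩
    obtain ⟨hx₁, hx₂⟩ := hx
    obtain ⟨hy₁, hy₂⟩ := hy
    interval_cases x <;> interval_cases y <;> simp_all [gridUnits]
  · simp only [gridUnits, mem_insert, mem_singleton, Prod.mk.injEq]
    rintro (⟨rfl, rfl⟩ | ⟨rfl, rfl⟩ | ⟨rfl, rfl⟩ | ⟨rfl, rfl⟩) <;> norm_num

theorem adjCell_iff_sub_mem_gridUnits {p q : ℤ × ℤ} : AdjCell p q ↔ q - p ∈ gridUnits := by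
  rw [← sq_add_sq_eq_one_iff_mem_gridUnits, AdjCell, Prod.fst_sub, Prod.snd_sub]
  ring_nf

def gridGraph : SimpleGraph (ℤ × ℤ) where
  Adj := AdjCell
  symm := ⟨fun p q h => by rw [AdjCell] at *; rw [← h]; ring⟩
  loopless := ⟨fun p h => by simp [AdjCell] at h⟩

theorem connectedOn_gridGraph_of_connectedPoly {S : Finset (ℤ × ℤ)} (h : ConnectedPoly S) :
    gridGraph.ConnectedOn S := fun p hp q hq =>
  (SimpleGraph.reachable_iff_reflTransGen p q).mpr (h p hp q hq)

theorem PolyCongruent.image_add_left {s T : Finset (ℤ × ℤ)} (h : PolyCongruent s T) (c : ℤ × ℤ) :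
    PolyCongruent s (T.image (c + ·)) := by
  obtain ⟨f, hf, t, rfl⟩ := h
  refine ⟨f, hf, c + t, ?_⟩
  simp only [image_image, Function.comp_def, add_assoc]

-- Translations in `[-1, 1]²` suffice, which makes this a finite check.
theorem exists_elementary_image_eq_insert_zero :
    ∀ C ∈ gridUnits.powerset, C.Nonempty → ∃ s ∈ elementaryShapes, ∃ f ∈ dihedralMaps,
      ∃ t ∈ Icc (-1 : ℤ) 1 ×ˢ Icc (-1 : ℤ) 1, insert 0 C = s.image fun p => t + f p := by
  decide

theorem exists_polyCongruent_of_isStar {P : Finset (ℤ × ℤ)} (h : gridGraph.IsStar P) :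
    ∃ s ∈ elementaryShapes, PolyCongruent s P := by
  obtain ⟨c, L, hL, hadj, rfl⟩ := h
  have hsub : L.image (· - c) ∈ gridUnits.powerset := mem_powerset.mpr fun v hv => by
    obtain ⟨q, hq, rfl⟩ := mem_image.mp hv
    exact adjCell_iff_sub_mem_gridUnits.mp (hadj q hq)
  obtain ⟨s, hs, f, hf, t, -, hst⟩ := exists_elementary_image_eq_insert_zero _ hsub (hL.image _)
  have htrans : insert c L = (insert 0 (L.image (· - c))).image (c + ·) := by
    simp [image_insert, image_image, Function.comp_def]
  exact ⟨s, hs, htrans ▸ PolyCongruent.image_add_left ⟨f, hf, t, hst⟩ c⟩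

/-- Every connected polyomino of size at least 2 can be partitioned into pieces,
each congruent to one of the five elementary shapes. -/
theorem polyomino_decomposition (S : Finset (ℤ × ℤ))
    (hconn : ConnectedPoly S) (hcard : 2 ≤ S.card) :
    ∃ Part : Finset (Finset (ℤ × ℤ)),
      (Part : Set (Finset (ℤ × ℤ))).PairwiseDisjoint id ∧
      Part.sup id = S ∧
      ∀ t ∈ Part, ∃ s ∈ elementaryShapes, PolyCongruent s t := by
  obtain ⟨Part, hdisj, hsup, hstars⟩ :=
    SimpleGraph.exists_isStar_partition (connectedOn_gridGraph_of_connectedPoly hconn) hcard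
  exact ⟨Part, hdisj, hsup, fun t ht => exists_polyCongruent_of_isStar (hstars t ht)⟩
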